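/- Let 1 ≤ k1 ≤ t1 ≤ min(n1, m), 1 ≤ k2 ≤ t2 ≤ min(n2, m), t1·t2 ≤ m, and t1 − k1 ≤ t2 − k2. Let g1 ∈ L^{n1} with wt_R(g1) = t1 and g2 ∈ L^{n2} with wt_R(g2) = t2, and set G1 = Moore(g1, k1), G2 = Moore(g2, k2). Then every nonzero codeword of the row space of G1 ⊗ G2 (the extended Gabidulin–Kronecker product code) has rank weight at least t2 − k2 + 1, and there exists a nonzero codeword of the row space of G1 ⊗ G2 with rank weight at most (t1 − k1 + 1)·(t2 − k2 + 1). -/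

import Mathlib

open Matrix Kronecker

/-- Rank weight of a vector over the extension `L` of the base field `K`. -/
noncomputable def rankWeight (K : Type*) {L : Type*} [Field K] [Field L] [Algebra K L]
    {ι : Type*} (v : ι → L) : ℕ :=
  Module.finrank K (Submodule.span K (Set.range v))

/-- The `k × n` Moore matrix of `g`: entry `(i, j)` is `g j ^ q ^ i`. -/
def moore (q : ℕ) {L : Type*} [Field L] {n : ℕ} (g : Fin n → L) (k : ℕ) :
    Matrix (Fin k) (Fin n) L :=
  Matrix.of fun i j => g j ^ q ^ (i : ℕ)

/-!
A codeword `a ᵥ* moore q g k` of an extended Gabidulin code is `f ∘ g` for the `K`-linear map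
`f x = ∑ i, a i * x ^ q ^ i`. For `a ≠ 0`, every vector of `ker f` is a root of a nonzero
polynomial of degree at most `q ^ (k - 1)`, so `ker f` has dimension `< k`, and rank–nullity
on `span g` shows that the codeword has weight `> t - k`. Conversely, `k` unknowns `a i` suffice
to make `f` vanish on `k - 1` independent vectors of `span g`, which gives a codeword of weight
at most `t - k + 1`.

For the Kronecker product, each row `j₁ ↦ c (j₁, ·)` of a codeword is a codeword of
`EG_{k₂}(g₂)`, whence the lower bound. The product `c (j₁, j₂) = c₁ j₁ * c₂ j₂` of two
codewords is a codeword of the product code, and its support lies in the product of the two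
supports, whose dimension is at most the product of their dimensions.
-/

open Module Submodule Polynomial FiniteField

section Kronecker

variable {R m n p r : Type*} [CommSemiring R] [Fintype m] [Fintype n]

theorem Matrix.vecMul_kronecker_apply (x : m × n → R) (A : Matrix m p R) (B : Matrix n r R)
    (j₁ : p) (j₂ : r) :
    (x ᵥ* (A ⊗ₖ B)) (j₁, j₂) = ((fun i₂ => ((fun i₁ => x (i₁, i₂)) ᵥ* A) j₁) ᵥ* B) j₂ := by
  simp only [vecMul, dotProduct, kroneckerMap_apply, Fintype.sum_prod_type, Finset.sum_mul]
  rw [Finset.sum_comm]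
  exact Finset.sum_congr rfl fun _ _ => Finset.sum_congr rfl fun _ _ => by ring

theorem Matrix.vecMul_kronecker_mul_apply (u : m → R) (v : n → R) (A : Matrix m p R)
    (B : Matrix n r R) (j₁ : p) (j₂ : r) :
    ((fun i => u i.1 * v i.2) ᵥ* (A ⊗ₖ B)) (j₁, j₂) = (u ᵥ* A) j₁ * (v ᵥ* B) j₂ := by
  simp only [vecMul, dotProduct, kroneckerMap_apply, Fintype.sum_prod_type, Finset.sum_mul_sum]
  exact Finset.sum_congr rfl fun _ _ => Finset.sum_congr rfl fun _ _ => by ring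

end Kronecker

theorem Matrix.exists_ne_zero_vecMul_eq_zero {L m n : Type*} [Field L] [Fintype m] [Fintype n]
    (A : Matrix m n L) (h : Fintype.card n < Fintype.card m) : ∃ a ≠ 0, a ᵥ* A = 0 := by
  have hker : LinearMap.ker A.vecMulLinear ≠ ⊥ :=
    LinearMap.ker_ne_bot_of_finrank_lt (by simpa using h)
  obtain ⟨a, ha, hne⟩ := (Submodule.ne_bot_iff _).mp hker
  exact ⟨a, hne, ha⟩

theorem Submodule.finrank_map_add_finrank_inf_ker {K M N : Type*} [Field K] [AddCommGroup M]
    [Module K M] [AddCommGroup N] [Module K N] (V : Submodule K M) [FiniteDimensional K V]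
    (f : M →ₗ[K] N) : finrank K (V.map f) + finrank K ↥(V ⊓ LinearMap.ker f) = finrank K V := by
  rw [← LinearMap.range_domRestrict, ← map_comap_subtype, finrank_map_subtype_eq,
    ← LinearMap.ker_domRestrict]
  exact (f.domRestrict V).finrank_range_add_finrank_ker

section RankWeight

variable {K L : Type*} [Field K] [Field L] [Algebra K L]

instance finiteDimensional_span_range {ι : Type*} [Finite ι] (v : ι → L) :
    FiniteDimensional K (span K (Set.range v)) :=
  FiniteDimensional.span_of_finite K (Set.finite_range v)

theorem ne_zero_of_rankWeight_pos {ι : Type*} {v : ι → L} (h : 0 < rankWeight K v) : v ≠ 0 := by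
  rintro rfl
  rw [rankWeight, span_eq_bot.mpr (by rintro _ ⟨i, rfl⟩; rfl), finrank_bot] at h
  exact h.false

theorem rankWeight_le_of_range_subset {ι κ : Type*} [Finite κ] {v : ι → L} {w : κ → L}
    (h : Set.range v ⊆ Set.range w) : rankWeight K v ≤ rankWeight K w :=
  Submodule.finrank_mono (span_mono h)

theorem rankWeight_comp (f : L →ₗ[K] L) {ι : Type*} (g : ι → L) :
    rankWeight K (f ∘ g) = finrank K ((span K (Set.range g)).map f) := by
  rw [rankWeight, Set.range_comp, span_image]

theorem exists_fin_span_range_eq (W : Submodule K L) [FiniteDimensional K W] :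
    ∃ b : Fin (finrank K W) → L, span K (Set.range b) = W :=
  ⟨fun i => finBasis K W i, by
    rw [Set.range_comp', span_val_image_eq_iff]
    exact (finBasis K W).span_eq⟩

theorem span_range_mul {ι κ : Type*} (u : ι → L) (v : κ → L) :
    span K (Set.range fun j : ι × κ => u j.1 * v j.2) =
      span K (Set.range u) * span K (Set.range v) := by
  rw [span_mul_span, ← Set.image2_mul, Set.image2_range]

theorem rankWeight_mul_le {ι κ : Type*} [Finite ι] [Finite κ] (u : ι → L) (v : κ → L) :
    rankWeight K (fun j : ι × κ => u j.1 * v j.2) ≤ rankWeight K u * rankWeight K v := by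
  obtain ⟨b₁, hb₁⟩ : ∃ b : Fin (rankWeight K u) → L,
      span K (Set.range b) = span K (Set.range u) := exists_fin_span_range_eq _
  obtain ⟨b₂, hb₂⟩ : ∃ b : Fin (rankWeight K v) → L,
      span K (Set.range b) = span K (Set.range v) := exists_fin_span_range_eq _
  calc rankWeight K (fun j : ι × κ => u j.1 * v j.2)
      = rankWeight K (fun j => b₁ j.1 * b₂ j.2) := by
        show finrank K (span K _) = finrank K (span K _)
        rw [span_range_mul, span_range_mul, hb₁, hb₂]
    _ ≤ Fintype.card (Fin (rankWeight K u) × Fin (rankWeight K v)) := finrank_range_le_card _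
    _ = rankWeight K u * rankWeight K v := by simp

end RankWeight

section LinearizedPoly

variable (K) {L : Type*} [Field K] [Fintype K] [Field L]

noncomputable def linearizedPoly {k : ℕ} (a : Fin k → L) : L[X] :=
  ∑ i : Fin k, monomial (Fintype.card K ^ (i : ℕ)) (a i)

variable {K}

theorem coeff_linearizedPoly {k : ℕ} (a : Fin k → L) (i : Fin k) :
    (linearizedPoly K a).coeff (Fintype.card K ^ (i : ℕ)) = a i := by
  have hinj := Nat.pow_right_injective (Fintype.one_lt_card (α := K))
  rw [linearizedPoly, finsetSum_coeff, Finset.sum_eq_single i]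
  · exact coeff_monomial_same _ _
  · intro j _ hji
    exact coeff_monomial_of_ne _ fun h => hji (Fin.ext (hinj h.symm))
  · simp

theorem natDegree_linearizedPoly_le {k : ℕ} (a : Fin k → L) :
    (linearizedPoly K a).natDegree ≤ Fintype.card K ^ (k - 1) :=
  natDegree_sum_le_of_forall_le _ _ fun i _ => (natDegree_monomial_le _).trans
    (Nat.pow_le_pow_right Fintype.card_pos (Nat.le_sub_one_of_lt i.isLt))

end LinearizedPoly

section LinearizedMap

variable (K) {L : Type*} [Field K] [Fintype K] [Field L] [Algebra K L]

/-- `x ↦ ∑ i, a i * x ^ q ^ i` with `q = #K`, written with powers of the Frobenius so that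
`K`-linearity comes for free. -/
noncomputable def linearizedMap {k : ℕ} (a : Fin k → L) : L →ₗ[K] L :=
  ∑ i, a i • (frobeniusAlgHom K L ^ (i : ℕ)).toLinearMap

variable {K}

theorem linearizedMap_apply {k : ℕ} (a : Fin k → L) (x : L) :
    linearizedMap K a x = ∑ i, a i * x ^ Fintype.card K ^ (i : ℕ) := by
  simp [linearizedMap, AlgHom.coe_pow, coe_frobeniusAlgHom, pow_iterate]

theorem vecMul_moore {k n : ℕ} (a : Fin k → L) (g : Fin n → L) :
    a ᵥ* moore (Fintype.card K) g k = linearizedMap K a ∘ g := by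
  ext j
  simp [vecMul, dotProduct, moore, linearizedMap_apply]

theorem eval_linearizedPoly {k : ℕ} (a : Fin k → L) (x : L) :
    (linearizedPoly K a).eval x = linearizedMap K a x := by
  simp [linearizedPoly, linearizedMap_apply, eval_finsetSum]

theorem finrank_lt_of_le_ker_linearizedMap {k : ℕ} {a : Fin k → L} (ha : a ≠ 0)
    {W : Submodule K L} (hW : W ≤ LinearMap.ker (linearizedMap K a)) : finrank K W < k := by
  classical
  obtain ⟨i, hi⟩ := Function.ne_iff.mp ha
  have hP : linearizedPoly K a ≠ 0 := fun h => hi <| by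
    simpa [h] using (coeff_linearizedPoly (K := K) a i).symm
  have hroots : (W : Set L) ⊆ (linearizedPoly K a).roots.toFinset := fun x hx => by
    simpa [mem_roots hP, eval_linearizedPoly] using hW hx
  have : Finite W := ((linearizedPoly K a).roots.toFinset.finite_toSet.subset hroots).to_subtype
  have hcard : Fintype.card K ^ finrank K W < Fintype.card K ^ k := calc
    Fintype.card K ^ finrank K W = Nat.card W := by
      rw [natCard_eq_pow_finrank (K := K), Nat.card_eq_fintype_card]
    _ ≤ (linearizedPoly K a).roots.toFinset.card :=
      (Nat.card_mono (Finset.finite_toSet _) hroots).trans_eq (Nat.card_eq_finsetCard _)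
    _ ≤ (linearizedPoly K a).natDegree := (Multiset.toFinset_card_le _).trans (card_roots' _)
    _ < Fintype.card K ^ k := (natDegree_linearizedPoly_le a).trans_lt
      (Nat.pow_lt_pow_right Fintype.one_lt_card (by have := i.isLt; omega))
  exact (Nat.pow_lt_pow_iff_right Fintype.one_lt_card).mp hcard

end LinearizedMap

section Gabidulin

variable {K L : Type*} [Field K] [Fintype K] [Field L] [Algebra K L] {k n : ℕ}

theorem rankWeight_vecMul_moore (a : Fin k → L) (g : Fin n → L) :
    rankWeight K (a ᵥ* moore (Fintype.card K) g k) =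
      finrank K ((span K (Set.range g)).map (linearizedMap K a)) := by
  rw [vecMul_moore, rankWeight_comp]

theorem rankWeight_lt_rankWeight_vecMul_moore_add {a : Fin k → L} (ha : a ≠ 0) (g : Fin n → L) :
    rankWeight K g < rankWeight K (a ᵥ* moore (Fintype.card K) g k) + k := by
  have hrank := finrank_map_add_finrank_inf_ker (span K (Set.range g)) (linearizedMap K a)
  have hker := finrank_lt_of_le_ker_linearizedMap ha (inf_le_right (a := span K (Set.range g)))
  rw [rankWeight_vecMul_moore, rankWeight]
  omega

theorem exists_rankWeight_vecMul_moore_le (g : Fin n → L) (hk : 1 ≤ k)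
    (hkg : k ≤ rankWeight K g) :
    ∃ a : Fin k → L, a ᵥ* moore (Fintype.card K) g k ≠ 0 ∧
      rankWeight K (a ᵥ* moore (Fintype.card K) g k) + k ≤ rankWeight K g + 1 := by
  obtain ⟨d, rfl⟩ : ∃ d, k = d + 1 := ⟨k - 1, by omega⟩
  have hd : d ≤ rankWeight K g := by omega
  let b := finBasis K (span K (Set.range g))
  let w : Fin d → L := fun i => b (Fin.castLE hd i)
  have hw : LinearIndependent K w :=
    (b.linearIndependent.map' _ (ker_subtype _)).comp _ (Fin.castLE_injective hd)
  -- `d + 1` unknowns `a i` and `d` linear conditions `linearizedMap K a (w j) = 0`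
  obtain ⟨a, ha, haw⟩ :=
    (moore (Fintype.card K) w (d + 1)).exists_ne_zero_vecMul_eq_zero (by simp)
  rw [vecMul_moore] at haw
  refine ⟨a, ne_zero_of_rankWeight_pos (K := K) ?_, ?_⟩
  · have := rankWeight_lt_rankWeight_vecMul_moore_add (K := K) ha g
    omega
  · have hU :
        span K (Set.range w) ≤ span K (Set.range g) ⊓ LinearMap.ker (linearizedMap K a) := by
      rw [le_inf_iff, span_le, span_le]
      constructor
      · rintro _ ⟨i, rfl⟩
        exact (b _).2
      · rintro _ ⟨i, rfl⟩
        exact congrFun haw i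
    have hdim := Submodule.finrank_mono hU
    rw [finrank_span_eq_card hw, Fintype.card_fin] at hdim
    have hrank := finrank_map_add_finrank_inf_ker (span K (Set.range g)) (linearizedMap K a)
    rw [rankWeight_vecMul_moore, rankWeight]
    omega

end Gabidulin

theorem egk_min_rank_distance_case2_general
    (q n1 k1 n2 k2 t1 t2 : ℕ)
    (K L : Type*) [Field K] [Fintype K] [Field L] [Algebra K L]
    (hq : Fintype.card K = q)
    (hk1pos : 1 ≤ k1) (hk1t1 : k1 ≤ t1)
    (hk2pos : 1 ≤ k2) (hk2t2 : k2 ≤ t2)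
    (g1 : Fin n1 → L) (hg1 : rankWeight K g1 = t1)
    (g2 : Fin n2 → L) (hg2 : rankWeight K g2 = t2) :
    (∀ c : Fin n1 × Fin n2 → L,
      (∃ x : Fin k1 × Fin k2 → L, c = x ᵥ* (moore q g1 k1 ⊗ₖ moore q g2 k2)) →
      c ≠ 0 → t2 - k2 + 1 ≤ rankWeight K c) ∧
    ∃ c : Fin n1 × Fin n2 → L,
      (∃ x : Fin k1 × Fin k2 → L, c = x ᵥ* (moore q g1 k1 ⊗ₖ moore q g2 k2)) ∧
      c ≠ 0 ∧ rankWeight K c ≤ (t1 - k1 + 1) * (t2 - k2 + 1) := by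
  subst hq
  refine ⟨?_, ?_⟩
  · rintro c ⟨x, rfl⟩ hc
    set G₁ := moore (Fintype.card K) g1 k1
    set G₂ := moore (Fintype.card K) g2 k2
    obtain ⟨⟨j₁, j₂⟩, hj⟩ := Function.ne_iff.mp hc
    set y : Fin k2 → L := fun i₂ => ((fun i₁ => x (i₁, i₂)) ᵥ* G₁) j₁
    have hrow (j : Fin n2) : (x ᵥ* (G₁ ⊗ₖ G₂)) (j₁, j) = (y ᵥ* G₂) j :=
      vecMul_kronecker_apply x G₁ G₂ j₁ j
    have hy : y ≠ 0 := fun hy => hj (by rw [hrow, hy, zero_vecMul]; rfl)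
    have hrowWeight : rankWeight K (y ᵥ* G₂) ≤ rankWeight K (x ᵥ* (G₁ ⊗ₖ G₂)) :=
      rankWeight_le_of_range_subset (by rintro _ ⟨j, rfl⟩; exact ⟨(j₁, j), hrow j⟩)
    have hlow : rankWeight K g2 < rankWeight K (y ᵥ* G₂) + k2 :=
      rankWeight_lt_rankWeight_vecMul_moore_add hy g2
    omega
  · obtain ⟨a₁, hc₁, h₁⟩ := exists_rankWeight_vecMul_moore_le g1 hk1pos (hg1 ▸ hk1t1)
    obtain ⟨a₂, hc₂, h₂⟩ := exists_rankWeight_vecMul_moore_le g2 hk2pos (hg2 ▸ hk2t2)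
    obtain ⟨j₁, hj₁⟩ := Function.ne_iff.mp hc₁
    obtain ⟨j₂, hj₂⟩ := Function.ne_iff.mp hc₂
    set G₁ := moore (Fintype.card K) g1 k1
    set G₂ := moore (Fintype.card K) g2 k2
    refine ⟨fun j => (a₁ ᵥ* G₁) j.1 * (a₂ ᵥ* G₂) j.2,
      ⟨fun i => a₁ i.1 * a₂ i.2, funext fun j => (vecMul_kronecker_mul_apply _ _ _ _ _ _).symm⟩,
      fun h => mul_ne_zero hj₁ hj₂ (congrFun h (j₁, j₂)), ?_⟩
    exact (rankWeight_mul_le _ _).trans (Nat.mul_le_mul (by omega) (by omega))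

theorem egk_min_rank_distance_case2
    (q m n1 k1 n2 k2 t1 t2 : ℕ)
    (K L : Type*) [Field K] [Fintype K] [Field L] [Algebra K L]
    (hq : Fintype.card K = q) (hm : Module.finrank K L = m)
    (hk1pos : 1 ≤ k1) (hk1t1 : k1 ≤ t1) (ht1 : t1 ≤ min n1 m)
    (hk2pos : 1 ≤ k2) (hk2t2 : k2 ≤ t2) (ht2 : t2 ≤ min n2 m)
    (htm : t1 * t2 ≤ m) (hd : t1 - k1 ≤ t2 - k2)
    (g1 : Fin n1 → L) (hg1 : rankWeight K g1 = t1)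
    (g2 : Fin n2 → L) (hg2 : rankWeight K g2 = t2) :
    (∀ c : Fin n1 × Fin n2 → L,
      (∃ x : Fin k1 × Fin k2 → L, c = x ᵥ* (moore q g1 k1 ⊗ₖ moore q g2 k2)) →
      c ≠ 0 → t2 - k2 + 1 ≤ rankWeight K c) ∧
    ∃ c : Fin n1 × Fin n2 → L,
      (∃ x : Fin k1 × Fin k2 → L, c = x ᵥ* (moore q g1 k1 ⊗ₖ moore q g2 k2)) ∧
      c ≠ 0 ∧ rankWeight K c ≤ (t1 - k1 + 1) * (t2 - k2 + 1) :=
  egk_min_rank_distance_case2_general q n1 k1 n2 k2 t1 t2 K L hq hk1pos hk1t1 hk2pos hk2t2 g1 hg1 g2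
    hg2
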